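/- T₂ = λn λf (((n)f)F)0̲, with F = λx λy (x)(s̲)y, is a storage operator for the integers. -/

import Mathlib

/- Untyped λ-calculus with de Bruijn indices, head reduction, Church numerals. -/

inductive Lam : Type
  | var : ℕ → Lam
  | app : Lam → Lam → Lam
  | lam : Lam → Lam
deriving DecidableEq, Repr

namespace Lam

/-- Shift free variables `≥ c` up by 1. -/
def lift (c : ℕ) : Lam → Lam
  | var n => if n < c then var n else var (n + 1)
  | app s t => app (s.lift c) (t.lift c)
  | lam t => lam (t.lift (c + 1))

/-- Push a substitution under a binder. -/
def up (σ : ℕ → Lam) : ℕ → Lam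
  | 0 => var 0
  | n + 1 => (σ n).lift 0

/-- Capture-avoiding simultaneous substitution. -/
def subst (σ : ℕ → Lam) : Lam → Lam
  | var n => σ n
  | app s t => app (s.subst σ) (t.subst σ)
  | lam t => lam (t.subst (up σ))

/-- `t.subst0 u` is `t[u/0]`, the β-contractum substitution. -/
def subst0 (t u : Lam) : Lam :=
  t.subst (fun n => match n with | 0 => u | n + 1 => var n)

/-- `m` occurs free in the term. -/
def FreeIn (m : ℕ) : Lam → Prop
  | var n => n = m
  | app s t => s.FreeIn m ∨ t.FreeIn m
  | lam t => t.FreeIn (m + 1)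

/-- A closed λ-term. -/
def Closed (t : Lam) : Prop := ∀ m, ¬ t.FreeIn m

end Lam

/-- One-step β-reduction (anywhere in the term). -/
inductive Beta : Lam → Lam → Prop
  | beta (t u) : Beta (.app (.lam t) u) (t.subst0 u)
  | appL {s s'} (t) : Beta s s' → Beta (.app s t) (.app s' t)
  | appR {t t'} (s) : Beta t t' → Beta (.app s t) (.app s t')
  | lam {t t'} : Beta t t' → Beta (.lam t) (.lam t')

/-- β-equivalence `≃β`. -/
def BetaEq : Lam → Lam → Prop := Relation.EqvGen Beta

/-- A term in (β-)normal form. -/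
def NormalForm (t : Lam) : Prop := ∀ u, ¬ Beta t u

/-- One step of head reduction: reduce the head redex. -/
inductive HStep : Lam → Lam → Prop
  | beta (t u) : HStep (.app (.lam t) u) (t.subst0 u)
  | lam {t t'} : HStep t t' → HStep (.lam t) (.lam t')
  | app {t t'} (u) : HStep t t' → (∀ s, t ≠ .lam s) → HStep (.app t u) (.app t' u)

/-- `HRedN k u v` : `u ≻ v` by a head reduction of length `h(u,v) = k`. -/
inductive HRedN : ℕ → Lam → Lam → Prop
  | refl (t) : HRedN 0 t t
  | step {k t u v} : HStep t u → HRedN k u v → HRedN (k + 1) t v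

/-- `u ≻ v` : `v` is obtained from `u` by head reduction. -/
def HRed (t u : Lam) : Prop := ∃ k, HRedN k t u

/-- Head normal form: no head redex. -/
def HeadNormal (t : Lam) : Prop := ∀ u, ¬ HStep t u

/-- Solvable: the head reduction terminates. -/
def Solvable (t : Lam) : Prop := ∃ v, HRed t v ∧ HeadNormal v

/-- `(t)u₁…uₙ` : iterated application. -/
def appList : Lam → List Lam → Lam
  | t, [] => t
  | t, u :: us => appList (t.app u) us

/-- `(f)ⁿ x` with `x = var 1`, `f = var 0`. -/
def churchBody : ℕ → Lam
  | 0 => .var 1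
  | n + 1 => .app (.var 0) (churchBody n)

/-- Church numeral `n̲ = λx λf (f)ⁿ x`. -/
def church (n : ℕ) : Lam := .lam (.lam (churchBody n))

/-- `0̲ = λx λf x`. -/
def czero : Lam := .lam (.lam (.var 1))

/-- `s̲ = λn λx λf (f)((n)x)f`. -/
def csucc : Lam := .lam (.lam (.lam (.app (.var 0) (.app (.app (.var 2) (.var 1)) (.var 0)))))

/-- `(s̲)ⁿ 0̲`. -/
def succIter : ℕ → Lam
  | 0 => czero
  | n + 1 => .app csucc (succIter n)

/-- `G = λx λy (x) λz (y)(s̲)z`. -/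
def Gop : Lam := .lam (.lam (.app (.var 1) (.lam (.app (.var 1) (.app csucc (.var 0))))))

/-- `δ = λf (f)0̲`. -/
def deltaOp : Lam := .lam (.app (.var 0) czero)

/-- `T₁ = λn ((n)δ)G`. -/
def T1 : Lam := .lam (.app (.app (.var 0) deltaOp) Gop)

/-- `F = λx λy (x)(s̲)y`. -/
def Fop : Lam := .lam (.lam (.app (.var 1) (.app csucc (.var 0))))

/-- `T₂ = λn λf (((n)f)F)0̲`. -/
def T2 : Lam := .lam (.lam (.app (.app (.app (.var 1) (.var 0)) Fop) czero))

/-- `θ₀ = λx λf λz (x)(λd z)(λx x)`. -/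
def theta0 : Lam := .lam (.lam (.lam (.app (.app (.var 2) (.lam (.var 1))) (.lam (.var 0)))))

/-- `T` is a storage operator for the integers (the fixed variable `f` is `var 0`). -/
def IsStorage (T : Lam) : Prop :=
  ∀ n : ℕ, ∃ τ : Lam, BetaEq τ (church n) ∧
    ∀ θ : Lam, BetaEq θ (church n) →
      ∃ σ : ℕ → Lam, HRed (.app (.app T θ) (.var 0)) (.app (.var 0) (τ.subst σ))

/-!
Since `n̲` is β-normal, confluence (via Takahashi's complete developments) turns `θ ≃β n̲` into
`θ →β* n̲`. By standardization, a reduction to an abstraction, a variable or an application with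
variable head can start with weak head steps that already expose that head form. So
`(T₂)θ f ≻ (((θ)f)F)0̲` head-reduces along the spine of `n̲`: `x` is instantiated by `f`, each `f`
on the spine by `F`, and each `F` moves one `s̲` onto the accumulator, as `(F)y W ≻ (y)(s̲)W`.
The argument of the resulting `(f)(s̲)ⁿ0̲` does not depend on `θ`.
-/

namespace Lam

theorem lift_lift (t : Lam) {c d : ℕ} (h : d ≤ c) :
    (t.lift c).lift d = (t.lift d).lift (c + 1) := by
  induction t generalizing c d with
  | var n => simp only [lift]; split_ifs <;> simp only [lift] <;> split_ifs <;> first | rfl | omega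
  | app s t ihs iht => simp only [lift, ihs h, iht h]
  | lam t ih => simp only [lift, ih (Nat.succ_le_succ h)]

theorem lift_subst (t : Lam) (σ : ℕ → Lam) (c : ℕ) :
    (t.subst σ).lift c = t.subst (fun n => (σ n).lift c) := by
  induction t generalizing σ c with
  | var n => rfl
  | app s t ihs iht => simp only [subst, lift, ihs, iht]
  | lam t ih =>
    have hup : up (fun n => (σ n).lift c) = fun n => (up σ n).lift (c + 1) := by
      funext n
      cases n with
      | zero => simp [up, lift]
      | succ n => exact lift_lift (σ n) (Nat.zero_le c)
    simp only [subst, lift, ih, hup]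

theorem subst_lift (t : Lam) (σ : ℕ → Lam) (c : ℕ) :
    (t.lift c).subst σ = t.subst (fun n => if n < c then σ n else σ (n + 1)) := by
  induction t generalizing σ c with
  | var n => simp only [lift]; split_ifs with h <;> simp [subst, h]
  | app s t ihs iht => simp only [subst, lift, ihs, iht]
  | lam t ih =>
    have hup : (fun n => if n < c + 1 then up σ n else up σ (n + 1)) =
        up (fun n => if n < c then σ n else σ (n + 1)) := by
      funext n
      cases n with
      | zero => simp [up]
      | succ n => by_cases h : n < c <;> simp [up, h]
    simp only [subst, lift, ih, hup]

theorem subst_subst (t : Lam) (σ τ : ℕ → Lam) :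
    (t.subst σ).subst τ = t.subst (fun n => (σ n).subst τ) := by
  induction t generalizing σ τ with
  | var n => rfl
  | app s t ihs iht => simp only [subst, ihs, iht]
  | lam t ih =>
    have hup : up (fun n => (σ n).subst τ) = fun n => (up σ n).subst (up τ) := by
      funext n
      cases n with
      | zero => rfl
      | succ n => simp only [up, lift_subst, subst_lift]; rfl
    simp only [subst, ih, hup]

theorem subst_var (t : Lam) : t.subst var = t := by
  induction t with
  | var n => rfl
  | app s t ihs iht => simp only [subst, ihs, iht]
  | lam t ih =>
    have hup : up var = var := by funext n; cases n <;> rfl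
    simp only [subst, hup, ih]

theorem subst0_lift (t u : Lam) : (t.lift 0).subst0 u = t := by
  rw [subst0, subst_lift]
  exact subst_var t

theorem subst_subst0 (t u : Lam) (σ : ℕ → Lam) :
    (t.subst0 u).subst σ = (t.subst (up σ)).subst0 (u.subst σ) := by
  simp only [subst0, subst_subst]
  congr 1
  funext n
  cases n with
  | zero => rfl
  | succ n => exact (subst0_lift (σ n) _).symm

theorem lift_subst0 (t u : Lam) (c : ℕ) :
    (t.subst0 u).lift c = (t.lift (c + 1)).subst0 (u.lift c) := by
  simp only [subst0, lift_subst, subst_lift]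
  congr 1
  funext n
  cases n with
  | zero => rfl
  | succ n => by_cases h : n < c <;> simp [h, lift]

end Lam

open Relation

def Red : Lam → Lam → Prop := ReflTransGen Beta

namespace Red

theorem app_left {t t' : Lam} (u : Lam) (h : Red t t') : Red (.app t u) (.app t' u) :=
  ReflTransGen.lift (Lam.app · u) (fun _ _ => Beta.appL u) _ _ h

theorem app_right {t t' : Lam} (s : Lam) (h : Red t t') : Red (.app s t) (.app s t') :=
  ReflTransGen.lift (Lam.app s) (fun _ _ => Beta.appR s) _ _ h

theorem lam {t t' : Lam} (h : Red t t') : Red (.lam t) (.lam t') :=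
  ReflTransGen.lift Lam.lam (fun _ _ => Beta.lam) _ _ h

theorem betaEq {t t' : Lam} (h : Red t t') : BetaEq t t' :=
  EqvGen.reflTransGen_le_eqvGen Beta _ _ h

end Red

theorem NormalForm.eq_of_red {t u : Lam} (ht : NormalForm t) (h : Red t u) : u = t := by
  rcases h.cases_head with h | ⟨v, hv, -⟩
  · exact h.symm
  · exact absurd hv (ht v)

inductive Par : Lam → Lam → Prop
  | var (n) : Par (.var n) (.var n)
  | app {s s' t t'} : Par s s' → Par t t' → Par (.app s t) (.app s' t')
  | lam {t t'} : Par t t' → Par (.lam t) (.lam t')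
  | beta {s s' t t'} : Par s s' → Par t t' → Par (.app (.lam s) t) (s'.subst0 t')

namespace Par

theorem refl (t : Lam) : Par t t := by
  induction t with
  | var n => exact var n
  | app s t ihs iht => exact app ihs iht
  | lam t ih => exact lam ih

theorem of_beta {t t' : Lam} (h : Beta t t') : Par t t' := by
  induction h with
  | beta t u => exact beta (refl t) (refl u)
  | appL t _ ih => exact app ih (refl t)
  | appR s _ ih => exact app (refl s) ih
  | lam _ ih => exact lam ih

theorem red {t t' : Lam} (h : Par t t') : Red t t' := by
  induction h with
  | var n => exact ReflTransGen.refl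
  | app _ _ ihs iht => exact (ihs.app_left _).trans (iht.app_right _)
  | lam _ ih => exact ih.lam
  | beta _ _ ihs iht => exact ((ihs.lam.app_left _).trans (iht.app_right _)).tail (Beta.beta _ _)

theorem lift {t t' : Lam} (h : Par t t') (c : ℕ) : Par (t.lift c) (t'.lift c) := by
  induction h generalizing c with
  | var n => exact refl _
  | app _ _ ihs iht => exact app (ihs c) (iht c)
  | lam _ ih => exact lam (ih (c + 1))
  | beta _ _ ihs iht => rw [Lam.lift_subst0]; exact beta (ihs (c + 1)) (iht c)

theorem subst {t t' : Lam} (h : Par t t') {σ σ' : ℕ → Lam} (hσ : ∀ n, Par (σ n) (σ' n)) :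
    Par (t.subst σ) (t'.subst σ') := by
  have up_par {σ σ' : ℕ → Lam} (hσ : ∀ n, Par (σ n) (σ' n)) :
      ∀ n, Par (Lam.up σ n) (Lam.up σ' n)
    | 0 => refl _
    | n + 1 => (hσ n).lift 0
  induction h generalizing σ σ' with
  | var n => exact hσ n
  | app _ _ ihs iht => exact app (ihs hσ) (iht hσ)
  | lam _ ih => exact lam (ih (up_par hσ))
  | beta _ _ ihs iht => rw [Lam.subst_subst0]; exact beta (ihs (up_par hσ)) (iht hσ)

theorem subst0 {t t' u u' : Lam} (ht : Par t t') (hu : Par u u') :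
    Par (t.subst0 u) (t'.subst0 u') :=
  ht.subst fun | 0 => hu | _ + 1 => refl _

end Par

def Lam.develop : Lam → Lam
  | .var n => .var n
  | .lam t => .lam t.develop
  | .app (.var n) t => .app (.var n) t.develop
  | .app (.app a b) t => .app (Lam.app a b).develop t.develop
  | .app (.lam s) t => s.develop.subst0 t.develop

/-- Takahashi's triangle property, which makes `Par` diamond. -/
theorem Par.develop {t u : Lam} (h : Par t u) : Par u t.develop := by
  induction h with
  | var n => exact var n
  | lam _ ih => exact lam ih
  | beta _ _ ihs iht => exact subst0 ihs iht
  | @app s s' t t' hs ht ihs iht =>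
    cases s with
    | var n => cases hs; exact app (var n) iht
    | app a b => exact app ihs iht
    | lam s₀ => cases hs; cases ihs with | lam ih₀ => exact beta ih₀ iht

theorem reflTransGen_par : ReflTransGen Par = Red := by
  funext t u
  apply propext
  constructor
  · intro h
    induction h with
    | refl => exact ReflTransGen.refl
    | tail _ hp ih => exact ih.trans hp.red
  · exact ReflTransGen.mono (fun _ _ => Par.of_beta) _ _

theorem equivalence_join_red : Equivalence (Join Red) := by
  rw [← reflTransGen_par]
  exact equivalence_join_reflTransGen fun a _ _ hb hc =>
    ⟨a.develop, .single hb.develop, .single hc.develop⟩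

theorem BetaEq.join {t u : Lam} (h : BetaEq t u) : Join Red t u :=
  equivalence_join_red.eqvGen_iff.1 <|
    EqvGen.mono (fun _ u h => ⟨u, .single h, .refl⟩) _ _ h

theorem BetaEq.red_of_normalForm {t u : Lam} (h : BetaEq t u) (hu : NormalForm u) : Red t u := by
  obtain ⟨v, htv, huv⟩ := h.join
  rwa [hu.eq_of_red huv] at htv

/-- Head reduction that does not go under `λ`. -/
inductive WH : Lam → Lam → Prop
  | beta (t u) : WH (.app (.lam t) u) (t.subst0 u)
  | app {t t'} (u) : WH t t' → WH (.app t u) (.app t' u)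

def WHs : Lam → Lam → Prop := ReflTransGen WH

namespace WH

theorem to_hStep {t u : Lam} (h : WH t u) : HStep t u := by
  induction h with
  | beta t u => exact HStep.beta t u
  | app u h ih => exact HStep.app u ih (by cases h <;> simp)

theorem to_beta {t u : Lam} (h : WH t u) : Beta t u := by
  induction h with
  | beta t u => exact Beta.beta t u
  | app u _ ih => exact Beta.appL u ih

theorem subst {t u : Lam} (h : WH t u) (σ : ℕ → Lam) : WH (t.subst σ) (u.subst σ) := by
  induction h generalizing σ with
  | beta t u => rw [Lam.subst_subst0]; exact beta _ _
  | app u _ ih => exact app _ (ih σ)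

theorem lift {t u : Lam} (h : WH t u) (c : ℕ) : WH (t.lift c) (u.lift c) := by
  induction h generalizing c with
  | beta t u => rw [Lam.lift_subst0]; exact beta _ _
  | app u _ ih => exact app _ (ih c)

end WH

namespace WHs

theorem to_hRed {t u : Lam} (h : WHs t u) : HRed t u := by
  induction h using ReflTransGen.head_induction_on with
  | refl => exact ⟨0, .refl _⟩
  | head hw _ ih => obtain ⟨k, hk⟩ := ih; exact ⟨k + 1, .step hw.to_hStep hk⟩

theorem red {t u : Lam} (h : WHs t u) : Red t u :=
  ReflTransGen.mono (fun _ _ => WH.to_beta) _ _ h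

theorem subst {t u : Lam} (h : WHs t u) (σ : ℕ → Lam) : WHs (t.subst σ) (u.subst σ) :=
  ReflTransGen.lift (Lam.subst σ) (fun _ _ hw => hw.subst σ) _ _ h

theorem lift {t u : Lam} (h : WHs t u) (c : ℕ) : WHs (t.lift c) (u.lift c) :=
  ReflTransGen.lift (Lam.lift c) (fun _ _ hw => hw.lift c) _ _ h

theorem app_left {t t' : Lam} (u : Lam) (h : WHs t t') : WHs (.app t u) (.app t' u) :=
  ReflTransGen.lift (Lam.app · u) (fun _ _ => WH.app u) _ _ h

theorem app_beta {t s : Lam} (u : Lam) (h : WHs t (.lam s)) : WHs (.app t u) (s.subst0 u) :=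
  (h.app_left u).tail (WH.beta s u)

end WHs

/-- Standard reduction, in Kashima's inductive presentation. -/
inductive St : Lam → Lam → Prop
  | var {t : Lam} (n) : WHs t (.var n) → St t (.var n)
  | app {t u v u' v' : Lam} : WHs t (.app u v) → St u u' → St v v' → St t (.app u' v')
  | lam {t u u' : Lam} : WHs t (.lam u) → St u u' → St t (.lam u')

namespace St

theorem refl (t : Lam) : St t t := by
  induction t with
  | var n => exact var n .refl
  | app s t ihs iht => exact app .refl ihs iht
  | lam t ih => exact lam .refl ih

theorem of_whs {s t u : Lam} (h₁ : WHs s t) (h₂ : St t u) : St s u := by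
  cases h₂ with
  | var n hw => exact var n (h₁.trans hw)
  | app hw ha hb => exact app (h₁.trans hw) ha hb
  | lam hw ha => exact lam (h₁.trans hw) ha

theorem red {t u : Lam} (h : St t u) : Red t u := by
  induction h with
  | var n hw => exact hw.red
  | app hw _ _ iha ihb => exact hw.red.trans ((iha.app_left _).trans (ihb.app_right _))
  | lam hw _ ih => exact hw.red.trans ih.lam

theorem lift {t u : Lam} (h : St t u) (c : ℕ) : St (t.lift c) (u.lift c) := by
  induction h generalizing c with
  | var n hw =>
    have := hw.lift c
    simp only [Lam.lift] at this ⊢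
    split_ifs at this ⊢ <;> exact var _ this
  | app hw _ _ iha ihb => exact app (hw.lift c) (iha c) (ihb c)
  | lam hw _ ih => exact lam (hw.lift c) (ih (c + 1))

theorem subst {t u : Lam} (h : St t u) {σ σ' : ℕ → Lam} (hσ : ∀ n, St (σ n) (σ' n)) :
    St (t.subst σ) (u.subst σ') := by
  induction h generalizing σ σ' with
  | var n hw => exact of_whs (hw.subst σ) (hσ n)
  | app hw _ _ iha ihb => exact app (hw.subst σ) (iha hσ) (ihb hσ)
  | lam hw _ ih =>
    refine lam (hw.subst σ) (ih fun n => ?_)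
    cases n with
    | zero => exact refl _
    | succ n => exact (hσ n).lift 0

theorem subst0 {t u t' u' : Lam} (ht : St t t') (hu : St u u') :
    St (t.subst0 u) (t'.subst0 u') :=
  ht.subst fun | 0 => hu | _ + 1 => refl _

theorem tail {t u v : Lam} (h : St t u) (hb : Beta u v) : St t v := by
  induction h generalizing v with
  | var n hw => cases hb
  | @app t a b a' b' hw ha hb' iha ihb =>
    cases hb with
    | beta s w =>
      cases ha with
      | lam hwa ha₁ =>
        exact of_whs (hw.trans (hwa.app_beta b)) (ha₁.subst0 hb')
    | appL w hL => exact app hw (iha hL) hb'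
    | appR w hR => exact app hw ha (ihb hR)
  | lam hw ha ih =>
    cases hb with
    | lam hb₁ => exact lam hw (ih hb₁)

theorem of_red {t u : Lam} (h : Red t u) : St t u := by
  induction h with
  | refl => exact refl t
  | tail _ hb ih => exact ih.tail hb

end St

theorem Red.whs_of_var {t : Lam} {n : ℕ} (h : Red t (.var n)) : WHs t (.var n) := by
  cases St.of_red h with
  | var _ hw => exact hw

theorem Red.exists_whs_lam {t s : Lam} (h : Red t (.lam s)) :
    ∃ s', WHs t (.lam s') ∧ Red s' s := by
  cases St.of_red h with
  | lam hw h₁ => exact ⟨_, hw, h₁.red⟩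

theorem Red.exists_whs_app_var {t u : Lam} {n : ℕ} (h : Red t (.app (.var n) u)) :
    ∃ s u', WHs t (.app s u') ∧ WHs s (.var n) ∧ Red u' u := by
  cases St.of_red h with
  | app hw h₁ h₂ =>
    cases h₁ with
    | var _ hw₁ => exact ⟨_, _, hw, hw₁, h₂.red⟩

theorem Lam.subst_iterate_app (f x : Lam) (n : ℕ) (σ : ℕ → Lam) :
    ((Lam.app f)^[n] x).subst σ = (Lam.app (f.subst σ))^[n] (x.subst σ) :=
  Function.Semiconj.iterate_right (f := Lam.subst σ) (ga := Lam.app f) (gb := Lam.app (f.subst σ))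
    (fun _ => rfl) n x

theorem churchBody_eq_iterate (n : ℕ) : churchBody n = (Lam.app (.var 0))^[n] (.var 1) := by
  induction n with
  | zero => rfl
  | succ n ih => rw [Function.iterate_succ_apply', ← ih]; rfl

theorem churchBody_subst (n : ℕ) (σ : ℕ → Lam) :
    (churchBody n).subst σ = (Lam.app (σ 0))^[n] (σ 1) := by
  rw [churchBody_eq_iterate, Lam.subst_iterate_app]; rfl

theorem churchBody_lift (n c : ℕ) : (churchBody n).lift (c + 2) = churchBody n := by
  induction n with
  | zero => simp [churchBody, Lam.lift]
  | succ n ih => simp [churchBody, Lam.lift, ih]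

theorem church_lift (n c : ℕ) : (church n).lift c = church n := by
  simp [church, Lam.lift, churchBody_lift]

theorem church_normalForm (n : ℕ) : NormalForm (church n) := by
  have body (n : ℕ) : NormalForm (churchBody n) := by
    induction n with
    | zero => intro u h; cases h
    | succ n ih => intro u h; cases h with | appL _ h => cases h | appR _ h => exact ih _ h
  intro u h
  cases h with | lam h => cases h with | lam h => exact body n _ h

theorem red_church_app (n : ℕ) (x f : Lam) :
    Red (.app (.app (church n) x) f) ((Lam.app f)^[n] x) := by
  have e₁ : (Lam.lam (churchBody n)).subst0 x = .lam ((Lam.app (.var 0))^[n] (x.lift 0)) :=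
    congrArg Lam.lam (churchBody_subst n _)
  have e₂ : ((Lam.app (.var 0))^[n] (x.lift 0)).subst0 f = (Lam.app f)^[n] x := by
    rw [Lam.subst0, Lam.subst_iterate_app]
    exact congrArg _ (Lam.subst0_lift x f)
  exact (ReflTransGen.single ((e₁ ▸ Beta.beta _ x).appL f)).tail (e₂ ▸ Beta.beta _ f)

theorem red_csucc_church (n : ℕ) : Red (.app csucc (church n)) (church (n + 1)) := by
  have e : Lam.subst0 (.lam (.lam (.app (.var 0) (.app (.app (.var 2) (.var 1)) (.var 0)))))
      (church n) = .lam (.lam (.app (.var 0) (.app (.app (church n) (.var 1)) (.var 0)))) := by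
    simp only [Lam.subst0, Lam.subst, Lam.up, church_lift]; rfl
  have h := ((red_church_app n (.var 1) (.var 0)).app_right (.var 0)).lam.lam
  rw [← churchBody_eq_iterate] at h
  exact (ReflTransGen.single (e ▸ Beta.beta _ (church n))).trans h

theorem red_succIter (n : ℕ) : Red (succIter n) (church n) := by
  induction n with
  | zero => exact .refl
  | succ n ih => exact (ih.app_right csucc).trans (red_csucc_church n)

theorem succIter_eq_iterate (n : ℕ) : succIter n = (Lam.app csucc)^[n] czero := by
  induction n with
  | zero => rfl
  | succ n ih => rw [Function.iterate_succ_apply', ← ih]; rfl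

theorem whs_Fop_app (x W : Lam) : WHs (.app (.app Fop x) W) (.app x (.app csucc W)) := by
  have e : (Lam.app (x.lift 0) (.app csucc (.var 0))).subst0 W = .app x (.app csucc W) :=
    congrArg (Lam.app · _) (Lam.subst0_lift x W)
  exact (ReflTransGen.single (WH.app W (WH.beta _ x))).tail (e ▸ WH.beta _ W)

theorem whs_T2_app (θ x : Lam) :
    WHs (.app (.app T2 θ) x) (.app (.app (.app θ x) Fop) czero) := by
  have e : (Lam.app (.app (.app (θ.lift 0) (.var 0)) Fop) czero).subst0 x =
      .app (.app (.app θ x) Fop) czero :=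
    congrArg (fun t => Lam.app (.app (.app t x) Fop) czero) (Lam.subst0_lift θ x)
  exact (ReflTransGen.single (WH.app x (WH.beta _ θ))).tail (e ▸ WH.beta _ x)

theorem whs_subst_app_of_red_churchBody {n : ℕ} {b : Lam} (hb : Red b (churchBody n))
    {σ : ℕ → Lam} (hσ : σ 0 = Fop) (W : Lam) :
    WHs (.app (b.subst σ) W) (.app (σ 1) ((Lam.app csucc)^[n] W)) := by
  induction n generalizing b W with
  | zero => exact (hb.whs_of_var.subst σ).app_left W
  | succ n ih =>
    obtain ⟨s, u, hbsu, hs, hu⟩ := Red.exists_whs_app_var (n := 0) hb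
    have hsF : WHs (s.subst σ) Fop := hσ ▸ hs.subst σ
    rw [Function.iterate_succ_apply]
    exact ((hbsu.subst σ).app_left W).trans <| ((hsF.app_left _).app_left W).trans <|
      (whs_Fop_app _ W).trans (ih hu _)

theorem whs_app_app_Fop_of_red_church {θ : Lam} {n : ℕ} (hθ : Red θ (church n)) (x W : Lam) :
    WHs (.app (.app (.app θ x) Fop) W) (.app x ((Lam.app csucc)^[n] W)) := by
  obtain ⟨b₀, hθb₀, hb₀⟩ := Red.exists_whs_lam (s := .lam (churchBody n)) hθ
  obtain ⟨b₁, hb₀b₁, hb₁⟩ := hb₀.exists_whs_lam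
  have hθx : WHs (.app (.app θ x) Fop) ((b₁.subst (Lam.up _)).subst0 Fop) :=
    WHs.app_beta Fop ((hθb₀.app_beta x).trans (hb₀b₁.subst _))
  rw [Lam.subst0, Lam.subst_subst] at hθx
  have h : WHs (.app (.app (.app θ x) Fop) W)
      (.app ((x.lift 0).subst0 Fop) ((Lam.app csucc)^[n] W)) :=
    (hθx.app_left W).trans (whs_subst_app_of_red_churchBody hb₁ rfl W)
  rwa [Lam.subst0_lift] at h

/-- `T₂ = λnλf(((n)f)F)0̲` is a storage operator for the integers. -/
theorem T2_is_storage : IsStorage T2 := by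
  intro n
  refine ⟨succIter n, (red_succIter n).betaEq, fun θ hθ => ⟨Lam.var, ?_⟩⟩
  rw [Lam.subst_var, succIter_eq_iterate]
  have hθn : Red θ (church n) := hθ.red_of_normalForm (church_normalForm n)
  exact WHs.to_hRed <|
    (whs_T2_app θ (.var 0)).trans (whs_app_app_Fop_of_red_church hθn (.var 0) czero)
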